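/- arXiv:1301.6646 — 2 statements merged into one kernel-verified Lean document; each statement's English description precedes it below -/
import Mathlib

section
/- Let K ≥ 1 and let w_1, …, w_{2K} ∈ H be unit vectors with ⟨w_i, w_j⟩ ≥ 0 for all i, j ∈ {1,…,2K}. Suppose the family (w_1, …, w_{2K}) is (ε, α)-robustly linearly independent for some ε > 0 and some α with 0 ≤ α < √2. If c, d ∈ ℝ^K have strictly positive entries and ‖Σ_{i=1}^K c_i w_i − Σ_{i=1}^K d_i w_{K+i}‖ < ε · √(‖c‖₂² + ‖d‖₂²), then there exist i, j ∈ {1, …, K} with ‖w_i − w_{K+j}‖ ≤ α. -/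
/-!
Put `a := (c, -d)`. The hypothesis says `‖∑ aᵢ wᵢ‖ < ε ‖a‖₂`, so robust linear independence yields
two indices whose unit directions `sign(aᵢ) wᵢ` nearly cancel: `‖σ wᵢ + τ wⱼ‖ ≤ α`. Nonnegative
correlations give `‖u + v‖ ≥ √2 > α` for unit vectors of equal sign, so the signs differ, i.e. one
index lies in each half, and then `‖σ wᵢ + τ wⱼ‖ = ‖wᵢ - wⱼ‖`.
-/

/-- A finite family of (nonzero) vectors is `(ε, α)`-robustly linearly independent. -/
def IsRLI {E : Type*} [NormedAddCommGroup E] [NormedSpace ℝ E] {n : ℕ}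
    (w : Fin n → E) (ε α : ℝ) : Prop :=
  ∀ a : Fin n → ℝ, ‖∑ i, a i • w i‖ < ε * Real.sqrt (∑ i, a i ^ 2) →
    ∃ i j, a i ≠ 0 ∧ a j ≠ 0 ∧
      ‖‖a i • w i‖⁻¹ • (a i • w i) + ‖a j • w j‖⁻¹ • (a j • w j)‖ ≤ α

open Finset

theorem IsRLI.comp_equiv {E : Type*} [NormedAddCommGroup E] [NormedSpace ℝ E] {m n : ℕ}
    {w : Fin n → E} {ε α : ℝ} (hw : IsRLI w ε α) (e : Fin m ≃ Fin n) :
    IsRLI (w ∘ e) ε α := by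
  intro a ha
  have hsum : ∑ k, (a ∘ e.symm) k • w k = ∑ k, a k • (w ∘ e) k := by
    rw [← e.sum_comp]; simp only [Function.comp_apply, e.symm_apply_apply]
  have hsq : ∑ k, (a ∘ e.symm) k ^ 2 = ∑ k, a k ^ 2 := by
    rw [← e.sum_comp]; simp only [Function.comp_apply, e.symm_apply_apply]
  obtain ⟨i, j, hi, hj, hij⟩ := hw (a ∘ e.symm) (by rwa [hsum, hsq])
  exact ⟨e.symm i, e.symm j, hi, hj, by simpa only [Function.comp_apply, e.apply_symm_apply]⟩

section InnerProductSpace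

variable {H : Type*} [NormedAddCommGroup H] [InnerProductSpace ℝ H]

theorem sqrt_two_le_norm_add_of_inner_nonneg {u v : H} (hu : ‖u‖ = 1) (hv : ‖v‖ = 1)
    (huv : 0 ≤ inner ℝ u v) : √2 ≤ ‖u + v‖ := by
  rw [← Real.sqrt_sq (norm_nonneg (u + v))]
  refine Real.sqrt_le_sqrt ?_
  rw [norm_add_sq_real, hu, hv]
  linarith

theorem inv_norm_smul_smul_of_pos {u : H} (hu : ‖u‖ = 1) {a : ℝ} (ha : 0 < a) :
    ‖a • u‖⁻¹ • (a • u) = u := by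
  rw [norm_smul, hu, mul_one, Real.norm_of_nonneg ha.le, smul_smul, inv_mul_cancel₀ ha.ne',
    one_smul]

theorem inv_norm_smul_smul_of_neg {u : H} (hu : ‖u‖ = 1) {a : ℝ} (ha : a < 0) :
    ‖a • u‖⁻¹ • (a • u) = -u := by
  have := inv_norm_smul_smul_of_pos hu (neg_pos.mpr ha)
  rwa [neg_smul, norm_neg, smul_neg, neg_eq_iff_eq_neg] at this

theorem IsRLI.exists_norm_sub_le_of_norm_sum_sub_sum_lt {m n : ℕ} {w : Fin (m + n) → H}
    (hw : ∀ i, ‖w i‖ = 1) (hpos : ∀ i j, 0 ≤ inner ℝ (w i) (w j)) {ε α : ℝ}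
    (hα : α < √2) (hRLI : IsRLI w ε α) {c : Fin m → ℝ} {d : Fin n → ℝ}
    (hc : ∀ i, 0 < c i) (hd : ∀ j, 0 < d j)
    (h : ‖∑ i, c i • w (Fin.castAdd n i) - ∑ j, d j • w (Fin.natAdd m j)‖
      < ε * √(∑ i, c i ^ 2 + ∑ j, d j ^ 2)) :
    ∃ i j, ‖w (Fin.castAdd n i) - w (Fin.natAdd m j)‖ ≤ α := by
  set a : Fin (m + n) → ℝ := Fin.append c (-d)
  have hsum : ∑ k, a k • w k =
      ∑ i, c i • w (Fin.castAdd n i) - ∑ j, d j • w (Fin.natAdd m j) := by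
    simp only [a, Fin.sum_univ_add, Fin.append_left, Fin.append_right, Pi.neg_apply, neg_smul,
      sum_neg_distrib, sub_eq_add_neg]
  have hsq : ∑ k, a k ^ 2 = ∑ i, c i ^ 2 + ∑ j, d j ^ 2 := by
    simp only [a, Fin.sum_univ_add, Fin.append_left, Fin.append_right, Pi.neg_apply, neg_sq]
  obtain ⟨k, l, -, -, hkl⟩ := hRLI a (by rwa [hsum, hsq])
  have hleft (i : Fin m) : ‖a (Fin.castAdd n i) • w (Fin.castAdd n i)‖⁻¹ •
      (a (Fin.castAdd n i) • w (Fin.castAdd n i)) = w (Fin.castAdd n i) := by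
    simpa only [a, Fin.append_left] using inv_norm_smul_smul_of_pos (hw _) (hc i)
  have hright (j : Fin n) : ‖a (Fin.natAdd m j) • w (Fin.natAdd m j)‖⁻¹ •
      (a (Fin.natAdd m j) • w (Fin.natAdd m j)) = -w (Fin.natAdd m j) := by
    simpa only [a, Fin.append_right, Pi.neg_apply] using
      inv_norm_smul_smul_of_neg (hw _) (neg_neg_iff_pos.mpr (hd j))
  have hsame (k l) : ¬ ‖w k + w l‖ ≤ α :=
    (hα.trans_le (sqrt_two_le_norm_add_of_inner_nonneg (hw k) (hw l) (hpos k l))).not_ge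
  induction k using Fin.addCases with
  | left i =>
    induction l using Fin.addCases with
    | left i' => exact absurd (by rwa [hleft, hleft] at hkl) (hsame _ _)
    | right j => exact ⟨i, j, by rwa [hleft, hright, ← sub_eq_add_neg] at hkl⟩
  | right j =>
    induction l using Fin.addCases with
    | left i => exact ⟨i, j, by rwa [hright, hleft, neg_add_eq_sub] at hkl⟩
    | right j' => exact absurd (by rwa [hright, hright, ← neg_add, norm_neg] at hkl) (hsame _ _)

end InnerProductSpace

/-- for a `(ε, α)`-RLI family of nonnegatively correlated unit
vectors with `α < √2`, a small difference of positive combinations of the two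
halves forces two close vectors, one from each half. -/
theorem stmt5 {H : Type*} [NormedAddCommGroup H] [InnerProductSpace ℝ H]
    (K : ℕ) (w : Fin (2 * K) → H)
    (hw : ∀ i, ‖w i‖ = 1)
    (hpos : ∀ i j, 0 ≤ (inner ℝ (w i) (w j) : ℝ))
    (ε α : ℝ) (hα : α < Real.sqrt 2)
    (hRLI : IsRLI w ε α)
    (c d : Fin K → ℝ) (hc : ∀ i, 0 < c i) (hd : ∀ i, 0 < d i)
    (h : ‖(∑ i : Fin K, c i • w ⟨i.1, by have := i.2; omega⟩)
          - ∑ i : Fin K, d i • w ⟨K + i.1, by have := i.2; omega⟩‖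
        < ε * Real.sqrt (∑ i, c i ^ 2 + ∑ i, d i ^ 2)) :
    ∃ i j : Fin K,
      ‖w ⟨i.1, by have := i.2; omega⟩ - w ⟨K + j.1, by have := j.2; omega⟩‖ ≤ α := by
  -- After reindexing by `Fin (K + K) ≃ Fin (2 * K)`, the two halves `⟨i, _⟩` and `⟨K + j, _⟩`
  -- are `Fin.castAdd K i` and `Fin.natAdd K j` definitionally.
  exact (hRLI.comp_equiv (finCongr (two_mul K).symm)).exists_norm_sub_le_of_norm_sum_sub_sum_lt
    (fun _ => hw _) (fun _ _ => hpos _ _) hα hc hd h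
end

section
/- Let K ≥ 1, set Y = √(3/(4^K − 1)), and let ε satisfy 0 < ε < Y. Let τ_1 < τ_2 < … < τ_K be real numbers and let a ∈ ℝ^K with ‖a‖₂ = 1 and ‖Σ_{i=1}^K a_i v_{τ_i}‖₂ < ε. Let i* be the smallest index with |a_{i*}| ≥ 2^{i*−1} Y, and let j* be the smallest index larger than i* with a_{j*} · a_{i*} < 0 (such indices exist). Then for every t with τ_{i*} ≤ t < τ_{j*}, one has |Σ_{i=1}^K a_i v_{τ_i}(t)| ≥ Y. -/
/-!
At a point `t ∈ [τ_{i*}, τ_{i*} + 1]` with `t < τ_{j*}` the box at `τ_{i*}` is on, every later box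
that is on carries a coefficient of the sign of `a_{i*}`, and the earlier coefficients have total
modulus at most `(1 + 2 + ⋯ + 2^{i*-1}) Y = (2^{i*} - 1) Y` (indices from `0`); hence the sum has
modulus at least `2^{i*} Y - (2^{i*} - 1) Y = Y` there.
If `τ_{j*}` lay beyond `τ_{i*} + 1`, this bound would hold on a whole unit
interval, forcing `‖Σ a_i v_{τ_i}‖₂ ≥ Y > ε`.
-/

/-- The box function: indicator of the interval `[τ, τ + 1]`. -/
noncomputable def boxFn (τ : ℝ) : ℝ → ℝ :=
  Set.indicator (Set.Icc τ (τ + 1)) fun _ => 1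

/-- The `L²` norm of a real function on `ℝ` (with respect to Lebesgue measure). -/
noncomputable def L2norm (f : ℝ → ℝ) : ℝ := Real.sqrt (∫ t, f t ^ 2)

open Finset MeasureTheory

lemma abs_le_abs_add_of_mul_nonneg {x y : ℝ} (h : 0 ≤ x * y) : |x| ≤ |x + y| :=
  sq_le_sq.1 (by nlinarith [sq_nonneg y])

lemma Fin.sum_Iio_two_pow {K : ℕ} (i₀ : Fin K) :
    ∑ i ∈ Iio i₀, (2 : ℝ) ^ (i : ℕ) = 2 ^ (i₀ : ℕ) - 1 := by
  have h := sum_map (Iio i₀) Fin.valEmbedding fun n => (2 : ℝ) ^ n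
  rw [Fin.map_valEmbedding_Iio, Nat.Iio_eq_range, geom_sum_eq (by norm_num)] at h
  norm_num at h
  exact h.symm

lemma le_abs_sum_mul_of_dominant {K : ℕ} {a b : Fin K → ℝ} {Y : ℝ} {i₀ : Fin K}
    (hb : ∀ i, b i ∈ Set.Icc (0 : ℝ) 1) (hb₀ : b i₀ = 1)
    (hdom : 2 ^ (i₀ : ℕ) * Y ≤ |a i₀|) (hbelow : ∀ i < i₀, |a i| ≤ 2 ^ (i : ℕ) * Y)
    (hsign : ∀ i, i₀ < i → b i ≠ 0 → 0 ≤ a i * a i₀) :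
    Y ≤ |∑ i, a i * b i| := by
  have hsplit : ∑ i, a i * b i =
      (a i₀ + ∑ i ∈ Ioi i₀, a i * b i) + ∑ i ∈ Iio i₀, a i * b i := by
    conv_rhs => rw [← mul_one (a i₀), ← hb₀, add_sum_Ioi_eq_sum_Ici (f := fun i => a i * b i)]
    rw [← sum_filter_not_add_sum_filter univ (· < i₀), filter_gt_eq_Iio]
    congr 2
    ext i; simp
  have hhead : |a i₀| ≤ |a i₀ + ∑ i ∈ Ioi i₀, a i * b i| := by
    refine abs_le_abs_add_of_mul_nonneg ?_
    rw [mul_sum]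
    refine sum_nonneg fun i hi => ?_
    rcases eq_or_ne (b i) 0 with h | h
    · simp [h]
    · nlinarith [hsign i (mem_Ioi.1 hi) h, (hb i).1]
  have htail : |∑ i ∈ Iio i₀, a i * b i| ≤ (2 ^ (i₀ : ℕ) - 1) * Y := calc
    _ ≤ ∑ i ∈ Iio i₀, |a i| := (abs_sum_le_sum_abs _ _).trans <| sum_le_sum fun i _ => by
        rw [abs_mul, abs_of_nonneg (hb i).1]
        exact mul_le_of_le_one_right (abs_nonneg _) (hb i).2
    _ ≤ ∑ i ∈ Iio i₀, 2 ^ (i : ℕ) * Y := sum_le_sum fun i hi => hbelow i (mem_Iio.1 hi)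
    _ = (2 ^ (i₀ : ℕ) - 1) * Y := by rw [← sum_mul, Fin.sum_Iio_two_pow]
  rw [hsplit]
  linarith [abs_sub_abs_le_abs_add (a i₀ + ∑ i ∈ Ioi i₀, a i * b i) (∑ i ∈ Iio i₀, a i * b i)]

lemma boxFn_of_mem {τ t : ℝ} (h : t ∈ Set.Icc τ (τ + 1)) : boxFn τ t = 1 :=
  Set.indicator_of_mem h _

lemma mem_Icc_of_boxFn_ne_zero {τ t : ℝ} (h : boxFn τ t ≠ 0) : t ∈ Set.Icc τ (τ + 1) :=
  Set.mem_of_indicator_ne_zero h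

lemma boxFn_mem_Icc (τ t : ℝ) : boxFn τ t ∈ Set.Icc (0 : ℝ) 1 := by
  unfold boxFn Set.indicator
  split_ifs <;> norm_num

lemma memLp_boxFn (p : ENNReal) (τ : ℝ) : MemLp (boxFn τ) p :=
  memLp_indicator_const p measurableSet_Icc 1 (Or.inr measure_Icc_lt_top.ne)

lemma memLp_sum_mul_boxFn {ι : Type*} (s : Finset ι) (p : ENNReal) (a τ : ι → ℝ) :
    MemLp (fun t => ∑ i ∈ s, a i * boxFn (τ i) t) p :=
  memLp_finsetSum s fun i _ => (memLp_boxFn p (τ i)).const_mul (a i)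

lemma le_L2norm_of_le_abs_on_Icc {f : ℝ → ℝ} (hf : MemLp f 2) {c x : ℝ} (hc : 0 ≤ c)
    (h : ∀ t ∈ Set.Icc x (x + 1), c ≤ |f t|) : c ≤ L2norm f := by
  have hIcc : c ^ 2 ≤ ∫ t in Set.Icc x (x + 1), f t ^ 2 := calc
    c ^ 2 = ∫ _ in Set.Icc x (x + 1), c ^ 2 := by simp [Real.volume_real_Icc]
    _ ≤ ∫ t in Set.Icc x (x + 1), f t ^ 2 :=
      setIntegral_mono_on (integrableOn_const measure_Icc_lt_top.ne)
        hf.integrable_sq.integrableOn measurableSet_Icc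
        fun t ht => (pow_le_pow_left₀ hc (h t ht) 2).trans_eq (sq_abs _)
  calc c = √(c ^ 2) := (Real.sqrt_sq hc).symm
    _ ≤ L2norm f := Real.sqrt_le_sqrt <| hIcc.trans <|
      setIntegral_le_integral hf.integrable_sq (ae_of_all _ fun t => sq_nonneg _)

/-- Indices are 0-based, so the paper's bound `2^{i−1} Y` reads `2^i * Y` here. -/
theorem stmt13_general (K : ℕ) (Y ε : ℝ)
    (hε : 0 < ε) (hεY : ε < Y)
    (τ : Fin K → ℝ) (hτ : StrictMono τ)
    (a : Fin K → ℝ)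
    (hsmall : L2norm (fun t => ∑ i, a i * boxFn (τ i) t) < ε)
    (istar : Fin K) (histar : 2 ^ (istar : ℕ) * Y ≤ |a istar|)
    (hmin : ∀ i : Fin K, i < istar → |a i| < 2 ^ (i : ℕ) * Y)
    (jstar : Fin K)
    (hjmin : ∀ j : Fin K, istar < j → j < jstar → ¬ a j * a istar < 0) :
    ∀ t : ℝ, τ istar ≤ t → t < τ jstar → Y ≤ |∑ i, a i * boxFn (τ i) t| := by
  have hpoint : ∀ t ∈ Set.Icc (τ istar) (τ istar + 1), t < τ jstar →
      Y ≤ |∑ i, a i * boxFn (τ i) t| := by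
    intro t ht htj
    refine le_abs_sum_mul_of_dominant (fun i => boxFn_mem_Icc _ t) (boxFn_of_mem ht) histar
      (fun i hi => (hmin i hi).le) fun i hi hne => not_lt.1 (hjmin i hi ?_)
    by_contra! hji
    exact (hτ.monotone hji |>.trans (mem_Icc_of_boxFn_ne_zero hne).1).not_gt htj
  have hoverlap : τ jstar ≤ τ istar + 1 := by
    by_contra! h
    have := le_L2norm_of_le_abs_on_Icc (memLp_sum_mul_boxFn univ 2 a τ) (hε.trans hεY).le
      fun t ht => hpoint t ht (ht.2.trans_lt h)
    linarith
  exact fun t ht htj => hpoint t ⟨ht, htj.le.trans hoverlap⟩ htj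

/-- on the interval `[τ_{i*}, τ_{j*})` the combination of box
functions has pointwise magnitude at least `Y`. Indices are 0-based, so the
paper's `2^{i−1}` bound reads `2^i` here. -/
theorem stmt13 (K : ℕ) (hK : 1 ≤ K) (Y ε : ℝ)
    (hY : Y = Real.sqrt (3 / (4 ^ K - 1)))
    (hε : 0 < ε) (hεY : ε < Y)
    (τ : Fin K → ℝ) (hτ : StrictMono τ)
    (a : Fin K → ℝ) (ha : Real.sqrt (∑ i, a i ^ 2) = 1)
    (hsmall : L2norm (fun t => ∑ i, a i * boxFn (τ i) t) < ε)
    (istar : Fin K) (histar : 2 ^ (istar : ℕ) * Y ≤ |a istar|)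
    (hmin : ∀ i : Fin K, i < istar → |a i| < 2 ^ (i : ℕ) * Y)
    (jstar : Fin K) (hij : istar < jstar) (hjstar : a jstar * a istar < 0)
    (hjmin : ∀ j : Fin K, istar < j → j < jstar → ¬ a j * a istar < 0) :
    ∀ t : ℝ, τ istar ≤ t → t < τ jstar → Y ≤ |∑ i, a i * boxFn (τ i) t| :=
  stmt13_general K Y ε hε hεY τ hτ a hsmall istar histar hmin jstar hjmin
end
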